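/- arXiv:1707.09244 — 4 statements merged into one kernel-verified Lean document; each statement's English description precedes it below -/
import Mathlib

section
/- Consider N agents with scalar states η_i : [-τ,∞) → ℝ, continuous, satisfying for t > 0 the delayed system η_i'(t) = Σ_{j ∈ L(i)} a_{ij}(t)(η_j(t-τ) - η_i(t)), where each a_{ij} : ℝ → ℝ is continuous and nonnegative, and the leader sets satisfy the hierarchical condition j ∈ L(i) ⇒ j < i, with L(1) = ∅. If η_i(s) ≥ 0 for all i and all s ∈ [-τ,0], then η_i(t) ≥ 0 for all i ∈ {1,...,N} and all t ≥ 0. -/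
theorem stmt_1 (N : ℕ) (τ : ℝ) (hτ : 0 < τ)
    (η : Fin N → ℝ → ℝ) (a : Fin N → Fin N → ℝ → ℝ)
    (L : Fin N → Finset (Fin N))
    (ha_cont : ∀ i j, Continuous (a i j)) (ha_nonneg : ∀ i j t, 0 ≤ a i j t)
    (hη_cont : ∀ i, Continuous (η i))
    (hHL : ∀ i, ∀ j ∈ L i, j < i)
    (hode : ∀ i, ∀ t > (0:ℝ),
      HasDerivAt (η i) (∑ j ∈ L i, a i j t * (η j (t - τ) - η i t)) t)
    (hinit : ∀ i, ∀ s ∈ Set.Icc (-τ) (0:ℝ), 0 ≤ η i s) :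
    ∀ i, ∀ t ≥ (0:ℝ), 0 ≤ η i t := by
  suffices main : ∀ n : ℕ, ∀ i : Fin N, i.val = n → ∀ t ≥ (0:ℝ), 0 ≤ η i t by
    exact fun i => main i.val i rfl
  intro n
  induction n using Nat.strong_induction_on with
  | _ n ih' =>
    intro i hi
    have ih : ∀ j : Fin N, j < i → ∀ t, t ≥ (0:ℝ) → 0 ≤ η j t := by
      intro j hj
      exact ih' j.val (hi ▸ (Fin.lt_def.mp hj)) j rfl
    -- leaders are nonnegative on [-τ, ∞)
    have hj : ∀ j : Fin N, j < i → ∀ u, -τ ≤ u → 0 ≤ η j u := by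
      intro j hji u hu
      rcases le_or_gt u 0 with h | h
      · exact hinit j u ⟨hu, h⟩
      · exact ih j hji u h.le
    intro t ht
    by_contra hcon
    push_neg at hcon
    have ht0 : 0 < t := by
      rcases lt_or_eq_of_le ht with h | h
      · exact h
      · exfalso
        exact absurd (hinit i 0 ⟨by linarith, le_refl 0⟩) (by rw [← h] at hcon; linarith)
    set K : Set ℝ := Set.Icc 0 t ∩ η i ⁻¹' Set.Ici 0 with hK
    have hKclosed : IsClosed K := isClosed_Icc.inter (isClosed_Ici.preimage (hη_cont i))
    have hKne : K.Nonempty := ⟨0, ⟨le_refl 0, ht0.le⟩, hinit i 0 ⟨by linarith, le_refl 0⟩⟩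
    have hKbdd : BddAbove K := ⟨t, fun s hs => hs.1.2⟩
    set t1 := sSup K with ht1
    have ht1mem : t1 ∈ K := hKclosed.csSup_mem hKne hKbdd
    have ht1nonneg : (0:ℝ) ≤ t1 := ht1mem.1.1
    have ht1le : t1 ≤ t := ht1mem.1.2
    have hηt1 : 0 ≤ η i t1 := ht1mem.2
    have ht1lt : t1 < t := by
      rcases lt_or_eq_of_le ht1le with h | h
      · exact h
      · exfalso; rw [h] at hηt1; linarith
    -- η i is negative on (t1, t]
    have hneg : ∀ s, t1 < s → s ≤ t → η i s < 0 := by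
      intro s hs1 hs2
      by_contra h
      push_neg at h
      have : s ∈ K := ⟨⟨le_trans ht1nonneg hs1.le, hs2⟩, h⟩
      exact absurd (le_csSup hKbdd this) (not_le.mpr hs1)
    -- monotone on [t1, t]
    have hmono : MonotoneOn (η i) (Set.Icc t1 t) := by
      apply monotoneOn_of_deriv_nonneg (convex_Icc t1 t) ((hη_cont i).continuousOn)
      · intro s hs
        rw [interior_Icc] at hs
        exact ((hode i s (lt_of_le_of_lt ht1nonneg hs.1)).differentiableAt).differentiableWithinAt
      · intro s hs
        rw [interior_Icc] at hs
        have hspos : 0 < s := lt_of_le_of_lt ht1nonneg hs.1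
        have hd := hode i s hspos
        rw [hd.deriv]
        apply Finset.sum_nonneg
        intro j hjL
        have hjlt : j < i := hHL i j hjL
        have hjn : 0 ≤ η j (s - τ) := hj j hjlt (s - τ) (by linarith)
        have hin : η i s < 0 := hneg s hs.1 hs.2.le
        exact mul_nonneg (ha_nonneg i j s) (by linarith)
    have := hmono ⟨le_refl t1, ht1le⟩ ⟨ht1le, le_refl t⟩ ht1le
    linarith
end

section
/- Let Ω ⊆ ℝ^d be a convex compact set, and let v_i : [-τ,∞) → ℝ^d, i = 1,...,N, be continuously differentiable solutions of v_i'(t) = Σ_{j ∈ L(i)} a_{ij}(t)(v_j(t-τ) - v_i(t)) for t > 0, with a_{ij} continuous nonnegative and L(i) ⊆ {1,...,i-1}, L(1) = ∅. If v_i(s) ∈ Ω for all i and all s ∈ [-τ,0], then v_i(t) ∈ Ω for all i and all t ≥ 0. -/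
theorem stmt_2 (d N : ℕ) (τ : ℝ) (hτ : 0 < τ)
    (Ω : Set (EuclideanSpace ℝ (Fin d))) (hΩconv : Convex ℝ Ω) (hΩcomp : IsCompact Ω)
    (v : Fin N → ℝ → EuclideanSpace ℝ (Fin d))
    (a : Fin N → Fin N → ℝ → ℝ) (L : Fin N → Finset (Fin N))
    (ha_cont : ∀ i j, Continuous (a i j)) (ha_nonneg : ∀ i j t, 0 ≤ a i j t)
    (hv_cont : ∀ i, Continuous (v i)) (hv_diff : ∀ i, Differentiable ℝ (v i))
    (hHL : ∀ i, ∀ j ∈ L i, j < i)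
    (hode : ∀ i, ∀ t > (0:ℝ),
      HasDerivAt (v i) (∑ j ∈ L i, a i j t • (v j (t - τ) - v i t)) t)
    (hinit : ∀ i, ∀ s ∈ Set.Icc (-τ) (0:ℝ), v i s ∈ Ω) :
    ∀ i, ∀ t ≥ (0:ℝ), v i t ∈ Ω := by
  have hΩclosed : IsClosed Ω := hΩcomp.isClosed
  have key : ∀ n : ℕ, ∀ i : Fin N, (i : ℕ) = n → ∀ t ≥ -τ, v i t ∈ Ω := by
    intro n
    induction n using Nat.strong_induction_on with
    | _ n ih =>
      intro i hi t ht
      rcases le_or_gt t 0 with ht0 | ht0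
      · exact hinit i t ⟨ht, ht0⟩
      · -- positive time: contradiction via separating hyperplane
        by_contra hnot
        -- induction hypothesis for lower agents
        have IH : ∀ j ∈ L i, ∀ s ≥ -τ, v j s ∈ Ω := by
          intro j hj s hs
          exact ih (j : ℕ) (hi ▸ hHL i j hj) j rfl s hs
        obtain ⟨f, u, hfu, huf⟩ :=
          geometric_hahn_banach_closed_point hΩconv hΩclosed hnot
        have hΩne : Ω.Nonempty := ⟨v i 0, hinit i 0 ⟨by linarith, le_refl _⟩⟩
        have himg : IsCompact (f '' Ω) := hΩcomp.image f.continuous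
        set c : ℝ := sSup (f '' Ω) with hc
        have hcmem : c ∈ f '' Ω := himg.sSup_mem (hΩne.image f)
        have hcu : c < u := by
          obtain ⟨x, hx, hfx⟩ := hcmem
          rw [← hfx]; exact hfu x hx
        have hle : ∀ x ∈ Ω, f x ≤ c := fun x hx =>
          le_csSup himg.bddAbove ⟨x, hx, rfl⟩
        set g : ℝ → ℝ := fun s => f (v i s) - c with hg
        have hgcont : Continuous g := (f.continuous.comp (hv_cont i)).sub continuous_const
        have hgdiff : Differentiable ℝ g :=
          (f.differentiable.comp (hv_diff i)).sub (differentiable_const c)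
        have hg0 : g 0 ≤ 0 := by
          have := hle _ (hinit i 0 ⟨by linarith, le_refl _⟩)
          simp [hg]; linarith
        have hgt : 0 < g t := by
          simp only [hg]; linarith
        -- derivative formula and sign
        have hderiv : ∀ s > (0:ℝ), 0 ≤ g s → deriv g s ≤ 0 := by
          intro s hs hgs
          have hD : HasDerivAt g
              (∑ j ∈ L i, a i j s * (f (v j (s - τ)) - f (v i s))) s := by
            have h1 : HasDerivAt (fun r => f (v i r))
                (f (∑ j ∈ L i, a i j s • (v j (s - τ) - v i s))) s :=
              f.hasFDerivAt.comp_hasDerivAt s (hode i s hs)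
            have h2 : f (∑ j ∈ L i, a i j s • (v j (s - τ) - v i s))
                = ∑ j ∈ L i, a i j s * (f (v j (s - τ)) - f (v i s)) := by
              rw [map_sum]
              refine Finset.sum_congr rfl fun j hj => ?_
              rw [map_smul, map_sub]
              simp [smul_eq_mul]
            rw [h2] at h1
            exact h1.sub_const c
          rw [hD.deriv]
          refine Finset.sum_nonpos fun j hj => ?_
          have h3 : f (v j (s - τ)) ≤ c := hle _ (IH j hj (s - τ) (by linarith))
          have h4 : c ≤ f (v i s) := by
            have : g s = f (v i s) - c := rfl
            linarith
          have := ha_nonneg i j s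
          nlinarith
        -- the set where g ≤ 0 on [0, t]
        set S : Set ℝ := Set.Icc 0 t ∩ g ⁻¹' Set.Iic 0 with hS
        have hScomp : IsCompact S :=
          isCompact_Icc.inter_right (IsClosed.preimage hgcont isClosed_Iic)
        have hSne : S.Nonempty := ⟨0, ⟨le_refl _, le_of_lt ht0⟩, hg0⟩
        set m : ℝ := sSup S with hm
        have hmS : m ∈ S := hScomp.sSup_mem hSne
        have hm0 : 0 ≤ m := hmS.1.1
        have hmt : m ≤ t := hmS.1.2
        have hgm : g m ≤ 0 := hmS.2
        have hmlt : m < t := by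
          rcases lt_or_eq_of_le hmt with h | h
          · exact h
          · exfalso; rw [h] at hgm; linarith
        have hpos : ∀ s, m < s → s ≤ t → 0 < g s := by
          intro s hms hst
          by_contra hle'
          push_neg at hle'
          have : s ∈ S := ⟨⟨le_trans hm0 hms.le, hst⟩, hle'⟩
          have := le_csSup hScomp.bddAbove this
          linarith
        have hanti : AntitoneOn g (Set.Icc m t) := by
          refine antitoneOn_of_deriv_nonpos (convex_Icc m t) (hgcont.continuousOn) 
            (fun s hs => (hgdiff s).differentiableWithinAt) ?_
          intro s hs
          rw [interior_Icc] at hs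
          exact hderiv s (lt_of_le_of_lt hm0 hs.1) (hpos s hs.1 hs.2.le).le
        have := hanti ⟨le_refl _, hmlt.le⟩ ⟨hmt, le_refl _⟩ hmlt.le
        linarith
  intro i t ht
  exact key (i : ℕ) i rfl t (by linarith)
end

section
/- Under the hypotheses of the invariance result, taking D₀ = max_{1≤i≤N} max_{s∈[-τ,0]} ‖v_i(s)‖, every solution of the delayed hierarchical Cucker-Smale system satisfies ‖v_i(t)‖ ≤ D₀ for all i = 1,...,N and all t ≥ 0. -/
/-!
Each ‖v_i‖² - D₀² satisfies a differential inequality f' ≤ -A f with A = ∑_{j ∈ L(i)} a_ij ≥ 0,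
as soon as the delayed leader velocities v_j(t - τ) stay in the ball of radius D₀; the integrating
factor exp (∫ A) then keeps f nonpositive. On [0, τ] the delayed velocities are initial data, and
beyond that they are earlier values of leaders, which have smaller indices; so the claim follows
by strong induction along the hierarchy.
-/

open Set

open scoped RealInnerProductSpace

theorem nonpos_of_hasDerivAt_le_neg_mul {f f' A : ℝ → ℝ} {a : ℝ} (hA : Continuous A)
    (hf : ContinuousOn f (Ici a)) (hf' : ∀ t > a, HasDerivAt f (f' t) t)
    (hle : ∀ t > a, f' t ≤ -(A t * f t)) (ha : f a ≤ 0) :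
    ∀ t ≥ a, f t ≤ 0 := by
  set F : ℝ → ℝ := fun t => ∫ x in a..t, A x
  have hF : ∀ t, HasDerivAt F (A t) t := fun t => (hA.integral_hasStrictDerivAt a t).hasDerivAt
  have hg' : ∀ t > a, HasDerivAt (fun t => f t * Real.exp (F t))
      (f' t * Real.exp (F t) + f t * (Real.exp (F t) * A t)) t :=
    fun t ht => (hf' t ht).mul ((hF t).exp)
  have hanti : AntitoneOn (fun t => f t * Real.exp (F t)) (Ici a) := by
    refine antitoneOn_of_hasDerivWithinAt_nonpos (convex_Ici a)
      (hf.mul (Real.continuous_exp.comp (continuous_iff_continuousAt.2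
        fun t => (hF t).continuousAt)).continuousOn)
      (fun t ht => (hg' t (by rwa [interior_Ici] at ht)).hasDerivWithinAt) fun t ht => ?_
    rw [interior_Ici] at ht
    have := hle t ht
    nlinarith [Real.exp_pos (F t)]
  intro t ht
  have hgt : f t * Real.exp (F t) ≤ f a := by
    simpa [F] using hanti self_mem_Ici ht ht
  exact nonpos_of_mul_nonpos_left (hgt.trans ha) (Real.exp_pos _)

section

variable {E ι : Type*} [NormedAddCommGroup E] [InnerProductSpace ℝ E]

theorem inner_sum_smul_sub_le {s : Finset ι} {a : ι → ℝ} {u : ι → E} {w : E} {D : ℝ}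
    (ha : ∀ j ∈ s, 0 ≤ a j) (hu : ∀ j ∈ s, ‖u j‖ ≤ D) :
    2 * ⟪w, ∑ j ∈ s, a j • (u j - w)⟫ ≤ -((∑ j ∈ s, a j) * (‖w‖ ^ 2 - D ^ 2)) := by
  rw [inner_sum, Finset.mul_sum, Finset.sum_mul, ← Finset.sum_neg_distrib]
  refine Finset.sum_le_sum fun j hj => ?_
  have hwu : ⟪w, u j⟫ ≤ ‖w‖ * D :=
    (real_inner_le_norm _ _).trans (mul_le_mul_of_nonneg_left (hu j hj) (norm_nonneg w))
  rw [real_inner_smul_right, inner_sub_right, real_inner_self_eq_norm_sq]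
  nlinarith [ha j hj, sq_nonneg (‖w‖ - D)]

theorem norm_le_of_hasDerivAt_sum_smul_sub {s : Finset ι} {a : ι → ℝ → ℝ}
    {u : ι → ℝ → E} {w : ℝ → E} {D : ℝ} (ha_cont : ∀ j, Continuous (a j))
    (ha_nonneg : ∀ j t, 0 ≤ a j t) (hw : Continuous w)
    (hode : ∀ t > 0, HasDerivAt w (∑ j ∈ s, a j t • (u j t - w t)) t)
    (hu : ∀ j ∈ s, ∀ t > 0, ‖u j t‖ ≤ D) (h0 : ‖w 0‖ ≤ D) :
    ∀ t ≥ 0, ‖w t‖ ≤ D := by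
  have hD : 0 ≤ D := (norm_nonneg _).trans h0
  have hsq := nonpos_of_hasDerivAt_le_neg_mul (f := fun t => ‖w t‖ ^ 2 - D ^ 2)
    (continuous_finsetSum s fun j _ => ha_cont j)
    ((hw.norm.pow 2).sub continuous_const).continuousOn
    (fun t ht => ((hode t ht).norm_sq).sub_const _)
    (fun t ht => inner_sum_smul_sub_le (fun j _ => ha_nonneg j t) fun j hj => hu j hj t ht)
    (by simp only [sub_nonpos]; gcongr)
  intro t ht
  exact (pow_le_pow_iff_left₀ (norm_nonneg _) hD two_ne_zero).1 (sub_nonpos.1 (hsq t ht))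

end

theorem stmt_3_general (d N : ℕ) (τ D₀ : ℝ) (hτ : 0 < τ)
    (v : Fin N → ℝ → EuclideanSpace ℝ (Fin d))
    (a : Fin N → Fin N → ℝ → ℝ) (L : Fin N → Finset (Fin N))
    (ha_cont : ∀ i j, Continuous (a i j)) (ha_nonneg : ∀ i j t, 0 ≤ a i j t)
    (hv_cont : ∀ i, Continuous (v i))
    (hHL : ∀ i, ∀ j ∈ L i, j < i)
    (hode : ∀ i, ∀ t > (0:ℝ),
      HasDerivAt (v i) (∑ j ∈ L i, a i j t • (v j (t - τ) - v i t)) t)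
    (hD₀ : IsGreatest {r : ℝ | ∃ i, ∃ s ∈ Set.Icc (-τ) (0:ℝ), r = ‖v i s‖} D₀) :
    ∀ i, ∀ t ≥ (0:ℝ), ‖v i t‖ ≤ D₀ := by
  have hinit : ∀ i, ∀ s ∈ Icc (-τ) 0, ‖v i s‖ ≤ D₀ := fun i s hs => hD₀.2 ⟨i, s, hs, rfl⟩
  intro i
  induction i using WellFoundedLT.induction with
  | _ i IH =>
    refine norm_le_of_hasDerivAt_sum_smul_sub (ha_cont i) (ha_nonneg i) (hv_cont i) (hode i)
      (fun j hj t ht => ?_) (hinit i 0 ⟨by linarith, le_rfl⟩)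
    rcases le_or_gt (t - τ) 0 with hpast | hpast
    · exact hinit j (t - τ) ⟨by linarith, hpast⟩
    · exact IH j (hHL i j hj) (t - τ) hpast.le

theorem stmt_3 (d N : ℕ) (τ D₀ : ℝ) (hτ : 0 < τ)
    (v : Fin N → ℝ → EuclideanSpace ℝ (Fin d))
    (a : Fin N → Fin N → ℝ → ℝ) (L : Fin N → Finset (Fin N))
    (ha_cont : ∀ i j, Continuous (a i j)) (ha_nonneg : ∀ i j t, 0 ≤ a i j t)
    (hv_cont : ∀ i, Continuous (v i)) (hv_diff : ∀ i, Differentiable ℝ (v i))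
    (hHL : ∀ i, ∀ j ∈ L i, j < i)
    (hode : ∀ i, ∀ t > (0:ℝ),
      HasDerivAt (v i) (∑ j ∈ L i, a i j t • (v j (t - τ) - v i t)) t)
    (hD₀ : IsGreatest {r : ℝ | ∃ i, ∃ s ∈ Set.Icc (-τ) (0:ℝ), r = ‖v i s‖} D₀) :
    ∀ i, ∀ t ≥ (0:ℝ), ‖v i t‖ ≤ D₀ :=
  stmt_3_general d N τ D₀ hτ v a L ha_cont ha_nonneg hv_cont hHL hode hD₀
end

section
/- Consider two agents with x_i' = v_i, v_1' = 0, and v_2'(t) = ψ(‖x₂(t−τ) − x₁(t−τ)‖)(v₁(t−τ) − v₂(t)) for t ≥ τ, with continuous initial data on [−τ, 0], where ψ : [0,∞) → (0,∞) is continuous, non-increasing, and satisfies ∫_a^∞ ψ(s) ds = ∞ for some a > 0. Then there exist constants C, B > 0 such that ‖v₂(t) − v₁(t)‖ ≤ C e^{−Bt} for all t ≥ 2τ, and sup_{t ≥ 0} ‖x₂(t) − x₁(t)‖ < ∞. -/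
/-!
Write `y = x₂ - x₁` and `w = v₂ - v₁`. For `t ≥ τ` the velocity gap solves the linear equation
`w' = -λ w` with `λ t = ψ ‖y (t - τ)‖`, so `w t = exp (-∫_τ^t λ) • w τ`, and `‖y t‖ ≤ F t`, where
`F t = ‖y τ‖ + ∫_τ^t ‖w‖`. As `F` is nondecreasing and `ψ` nonincreasing, `ψ (F t) ≤ λ t` for
`t ≥ 2τ`; hence `Φ (F t) + ‖w t‖` is nonincreasing there, `Φ` being a primitive of `ψ`. Since
`Φ → ∞`, `F` and with it `‖y‖` stay below some `R`, so `λ ≥ ψ R > 0` on `[2τ, ∞)` and `‖w‖`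
decays exponentially at rate `ψ R`.
-/

open Set Filter Real

variable {E : Type*} [NormedAddCommGroup E]

theorem eq_of_hasDerivAt_zero_of_le [NormedSpace ℝ E] {f : ℝ → E} {a b : ℝ}
    (hf : ∀ t ≥ a, HasDerivAt f 0 t) (hab : a ≤ b) : f b = f a :=
  constant_of_has_deriv_right_zero (fun s hs => (hf s hs.1).continuousAt.continuousWithinAt)
    (fun s hs => (hf s hs.1).hasDerivWithinAt) b ⟨hab, le_rfl⟩

theorem eq_exp_smul_of_hasDerivAt_neg_smul [NormedSpace ℝ E] {w : ℝ → E} {Λ lam : ℝ → ℝ} {t₀ t : ℝ}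
    (hΛ : ∀ s ≥ t₀, HasDerivAt Λ (lam s) s) (hw : ∀ s ≥ t₀, HasDerivAt w (-lam s • w s) s)
    (ht : t₀ ≤ t) : w t = exp (Λ t₀ - Λ t) • w t₀ := by
  have hconst : ∀ s ≥ t₀, HasDerivAt (fun s => exp (Λ s) • w s) 0 s := by
    intro s hs
    refine ((hΛ s hs).exp.smul (hw s hs)).congr_deriv ?_
    rw [smul_smul, ← add_smul, mul_neg, mul_comm, neg_add_cancel, zero_smul]
  have h := eq_of_hasDerivAt_zero_of_le hconst ht
  calc w t = exp (-Λ t) • exp (Λ t) • w t := by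
        rw [smul_smul, ← exp_add, neg_add_cancel, exp_zero, one_smul]
    _ = exp (Λ t₀ - Λ t) • w t₀ := by
        rw [h, smul_smul, ← exp_add, neg_add_eq_sub]

theorem antitoneOn_comp_add_mul_exp_neg {Φ φ F Λ lam : ℝ → ℝ} {W t₀ : ℝ} (hW : 0 ≤ W)
    (hΦ : ∀ r, HasDerivAt Φ (φ r) r) (hF : ∀ s, HasDerivAt F (W * exp (-Λ s)) s)
    (hΛ : ∀ s, HasDerivAt Λ (lam s) s) (hφ : ∀ s ≥ t₀, φ (F s) ≤ lam s) :
    AntitoneOn (fun s => Φ (F s) + W * exp (-Λ s)) (Ici t₀) := by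
  have hderiv : ∀ s, HasDerivAt (fun s => Φ (F s) + W * exp (-Λ s))
      ((φ (F s) - lam s) * (W * exp (-Λ s))) s := by
    intro s
    refine (((hΦ (F s)).comp s (hF s)).add ((hΛ s).neg.exp.const_mul W)).congr_deriv ?_
    simp only [Pi.neg_apply]
    ring
  refine antitoneOn_of_hasDerivWithinAt_nonpos (convex_Ici t₀)
    (fun s _ => (hderiv s).continuousAt.continuousWithinAt)
    (fun s _ => (hderiv s).hasDerivWithinAt) fun s hs => ?_
  rw [interior_Ici] at hs
  exact mul_nonpos_of_nonpos_of_nonneg (sub_nonpos.2 (hφ s (le_of_lt hs)))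
    (mul_nonneg hW (exp_pos _).le)

theorem exp_neg_le_of_hasDerivAt_of_le {Λ lam : ℝ → ℝ} {B t₁ t : ℝ}
    (hΛ : ∀ s, HasDerivAt Λ (lam s) s) (hB : ∀ s ≥ t₁, B ≤ lam s) (ht : t₁ ≤ t) :
    exp (-Λ t) ≤ exp (B * t₁ - Λ t₁) * exp (-B * t) := by
  have hline : Λ t₁ + B * (t - t₁) ≤ Λ t := by
    have hlin : ∀ s, HasDerivAt (fun s => Λ t₁ + B * (s - t₁)) B s := fun s => by
      simpa using ((hasDerivAt_id s).sub_const t₁).const_mul B |>.const_add (Λ t₁)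
    exact image_le_of_deriv_right_le_deriv_boundary
      (fun s _ => (hlin s).continuousAt.continuousWithinAt) (fun s _ => (hlin s).hasDerivWithinAt)
      (by simp) (fun s _ => (hΛ s).continuousAt.continuousWithinAt)
      (fun s _ => (hΛ s).hasDerivWithinAt) (fun s hs => hB s hs.1) ⟨ht, le_rfl⟩
  rw [← exp_add]
  exact exp_le_exp.2 (by linarith)

section DelayedFollower

variable {τ : ℝ} {ψ : ℝ → ℝ} {y w : ℝ → E}

/-- The weight `ψ ‖y (t - τ)‖`, with the delayed time clamped at `0` so that it is continuous on
all of `ℝ` although `y` is only controlled on `[0, ∞)`. -/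
noncomputable def delayedWeight (ψ : ℝ → ℝ) (y : ℝ → E) (τ t : ℝ) : ℝ :=
  ψ ‖y (max (t - τ) 0)‖

noncomputable def cumulativeWeight (ψ : ℝ → ℝ) (y : ℝ → E) (τ t : ℝ) : ℝ :=
  ∫ s in τ..t, delayedWeight ψ y τ s

/-- `‖y τ‖ + ∫_τ^t ‖w‖`, with `‖w‖` replaced by its explicit value on `[τ, ∞)` (which makes the
integrand continuous on all of `ℝ`). -/
noncomputable def displacementBound (ψ : ℝ → ℝ) (y w : ℝ → E) (τ t : ℝ) : ℝ :=
  ‖y τ‖ + ‖w τ‖ * ∫ s in τ..t, exp (-cumulativeWeight ψ y τ s)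

theorem delayedWeight_of_le {t : ℝ} (ht : τ ≤ t) : delayedWeight ψ y τ t = ψ ‖y (t - τ)‖ := by
  rw [delayedWeight, max_eq_left (sub_nonneg.2 ht)]

variable [NormedSpace ℝ E]

theorem continuous_delayedWeight (hψ : Continuous ψ) (hy : ∀ t ≥ 0, HasDerivAt y (w t) t) :
    Continuous (delayedWeight ψ y τ) := by
  have hclamp : Continuous fun t => max (t - τ) 0 := (continuous_sub_right τ).max continuous_const
  exact hψ.comp (continuous_iff_continuousAt.2 fun t => ContinuousAt.comp (g := y)
    (hy _ (le_max_right _ _)).continuousAt hclamp.continuousAt).norm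

theorem hasDerivAt_cumulativeWeight (hψ : Continuous ψ) (hy : ∀ t ≥ 0, HasDerivAt y (w t) t)
    (t : ℝ) : HasDerivAt (cumulativeWeight ψ y τ) (delayedWeight ψ y τ t) t :=
  have hc := continuous_delayedWeight (τ := τ) hψ hy
  intervalIntegral.integral_hasDerivAt_right (hc.intervalIntegrable _ _)
    (hc.stronglyMeasurableAtFilter _ _) hc.continuousAt

theorem norm_velocity_eq (hψ : Continuous ψ) (hy : ∀ t ≥ 0, HasDerivAt y (w t) t)
    (hw : ∀ t ≥ τ, HasDerivAt w (-ψ ‖y (t - τ)‖ • w t) t) {t : ℝ} (ht : τ ≤ t) :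
    ‖w t‖ = ‖w τ‖ * exp (-cumulativeWeight ψ y τ t) := by
  have hsol := eq_exp_smul_of_hasDerivAt_neg_smul (fun s _ => hasDerivAt_cumulativeWeight hψ hy s)
    (fun s hs => by rw [delayedWeight_of_le hs]; exact hw s hs) ht
  have hΛτ : cumulativeWeight ψ y τ τ = 0 := intervalIntegral.integral_same
  rw [hsol, hΛτ, zero_sub, norm_smul, norm_of_nonneg (exp_pos _).le, mul_comm]

theorem hasDerivAt_displacementBound (hψ : Continuous ψ) (hy : ∀ t ≥ 0, HasDerivAt y (w t) t)
    (t : ℝ) : HasDerivAt (displacementBound ψ y w τ)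
      (‖w τ‖ * exp (-cumulativeWeight ψ y τ t)) t := by
  have hc : Continuous fun s => exp (-cumulativeWeight ψ y τ s) :=
    (continuous_iff_continuousAt.2 fun s =>
      (hasDerivAt_cumulativeWeight hψ hy s).continuousAt).neg.rexp
  exact ((intervalIntegral.integral_hasDerivAt_right (hc.intervalIntegrable _ _)
    (hc.stronglyMeasurableAtFilter _ _) hc.continuousAt).const_mul _).const_add _

theorem monotone_displacementBound (hψ : Continuous ψ) (hy : ∀ t ≥ 0, HasDerivAt y (w t) t) :
    Monotone (displacementBound ψ y w τ) :=
  monotone_of_hasDerivAt_nonneg (hasDerivAt_displacementBound hψ hy) fun _ =>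
    mul_nonneg (norm_nonneg _) (exp_pos _).le

theorem norm_le_displacementBound (hτ : 0 ≤ τ) (hψ : Continuous ψ)
    (hy : ∀ t ≥ 0, HasDerivAt y (w t) t) (hw : ∀ t ≥ τ, HasDerivAt w (-ψ ‖y (t - τ)‖ • w t) t)
    {t : ℝ} (ht : τ ≤ t) : ‖y t‖ ≤ displacementBound ψ y w τ t :=
  image_norm_le_of_norm_deriv_right_le_deriv_boundary
    (fun s hs => (hy s (hτ.trans hs.1)).continuousAt.continuousWithinAt)
    (fun s hs => (hy s (hτ.trans hs.1)).hasDerivWithinAt) (by simp [displacementBound])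
    (hasDerivAt_displacementBound hψ hy) (fun s hs => (norm_velocity_eq hψ hy hw hs.1).le)
    ⟨ht, le_rfl⟩

theorem apply_displacementBound_le_delayedWeight (hτ : 0 ≤ τ) (hψ : Continuous ψ)
    (hψ_mono : AntitoneOn ψ (Ici 0)) (hy : ∀ t ≥ 0, HasDerivAt y (w t) t)
    (hw : ∀ t ≥ τ, HasDerivAt w (-ψ ‖y (t - τ)‖ • w t) t) {t : ℝ} (ht : 2 * τ ≤ t) :
    ψ (displacementBound ψ y w τ t) ≤ delayedWeight ψ y τ t := by
  have hbound : ‖y (t - τ)‖ ≤ displacementBound ψ y w τ t :=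
    (norm_le_displacementBound hτ hψ hy hw (by linarith)).trans
      (monotone_displacementBound hψ hy (by linarith))
  rw [delayedWeight_of_le (by linarith)]
  exact hψ_mono (norm_nonneg _) ((norm_nonneg _).trans hbound) hbound

theorem exists_displacementBound_le {a : ℝ} (hτ : 0 ≤ τ) (hψ : Continuous ψ)
    (hψ_mono : AntitoneOn ψ (Ici 0)) (hdiv : Tendsto (fun R => ∫ s in a..R, ψ s) atTop atTop)
    (hy : ∀ t ≥ 0, HasDerivAt y (w t) t) (hw : ∀ t ≥ τ, HasDerivAt w (-ψ ‖y (t - τ)‖ • w t) t) :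
    ∃ R, ∀ t ≥ τ, displacementBound ψ y w τ t ≤ R := by
  set F := displacementBound ψ y w τ
  set Φ : ℝ → ℝ := fun r => ∫ s in a..r, ψ s
  have hΦ : ∀ r, HasDerivAt Φ (ψ r) r := fun r =>
    intervalIntegral.integral_hasDerivAt_right (hψ.intervalIntegrable _ _)
      (hψ.stronglyMeasurableAtFilter _ _) hψ.continuousAt
  have hlyap := antitoneOn_comp_add_mul_exp_neg (t₀ := 2 * τ) (norm_nonneg (w τ)) hΦ
    (hasDerivAt_displacementBound hψ hy) (hasDerivAt_cumulativeWeight hψ hy)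
    fun s hs => apply_displacementBound_le_delayedWeight hτ hψ hψ_mono hy hw hs
  set K := Φ (F (2 * τ)) + ‖w τ‖ * exp (-cumulativeWeight ψ y τ (2 * τ))
  obtain ⟨R, hR⟩ := eventually_atTop.1 (hdiv.eventually_gt_atTop K)
  refine ⟨max R (F (2 * τ)), fun t ht => ?_⟩
  rcases le_total t (2 * τ) with h | h
  · exact (monotone_displacementBound hψ hy h).trans (le_max_right _ _)
  · refine le_max_of_le_left (not_lt.1 fun hRt => ?_)
    have hK := hlyap (mem_Ici.2 le_rfl) h h
    have hΦK := hR _ hRt.le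
    have hw_nonneg := mul_nonneg (norm_nonneg (w τ)) (exp_pos (-cumulativeWeight ψ y τ t)).le
    simp only at hK
    linarith

theorem flocking_of_delayed_follower {a : ℝ} (hτ : 0 ≤ τ) (hψ : Continuous ψ)
    (hψ_pos : ∀ s ≥ 0, 0 < ψ s) (hψ_mono : AntitoneOn ψ (Ici 0))
    (hdiv : Tendsto (fun R => ∫ s in a..R, ψ s) atTop atTop)
    (hy : ∀ t ≥ 0, HasDerivAt y (w t) t) (hw : ∀ t ≥ τ, HasDerivAt w (-ψ ‖y (t - τ)‖ • w t) t) :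
    (∃ C > 0, ∃ B > 0, ∀ t ≥ 2 * τ, ‖w t‖ ≤ C * exp (-B * t)) ∧ ∃ M, ∀ t ≥ 0, ‖y t‖ ≤ M := by
  obtain ⟨R, hR⟩ := exists_displacementBound_le hτ hψ hψ_mono hdiv hy hw
  have hyR : ∀ t ≥ τ, ‖y t‖ ≤ R := fun t ht =>
    (norm_le_displacementBound hτ hψ hy hw ht).trans (hR t ht)
  have hR₀ : 0 ≤ R := (norm_nonneg _).trans (hyR τ le_rfl)
  constructor
  · have hB : ∀ s ≥ 2 * τ, ψ R ≤ delayedWeight ψ y τ s := fun s hs => by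
      rw [delayedWeight_of_le (by linarith)]
      exact hψ_mono (norm_nonneg _) hR₀ (hyR _ (by linarith))
    set Λ := cumulativeWeight ψ y τ
    refine ⟨‖w τ‖ * exp (ψ R * (2 * τ) - Λ (2 * τ)) + 1, by positivity, ψ R, hψ_pos R hR₀,
      fun t ht => ?_⟩
    calc ‖w t‖ = ‖w τ‖ * exp (-Λ t) := norm_velocity_eq hψ hy hw (by linarith)
      _ ≤ ‖w τ‖ * (exp (ψ R * (2 * τ) - Λ (2 * τ)) * exp (-ψ R * t)) :=
        mul_le_mul_of_nonneg_left
          (exp_neg_le_of_hasDerivAt_of_le (hasDerivAt_cumulativeWeight hψ hy) hB ht) (norm_nonneg _)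
      _ ≤ _ := by nlinarith [exp_pos (-ψ R * t)]
  · obtain ⟨C, hC⟩ := (isCompact_Icc (a := 0) (b := τ)).exists_bound_of_continuousOn (f := y)
      fun s hs => (hy s hs.1).continuousAt.continuousWithinAt
    refine ⟨max C R, fun t ht => ?_⟩
    rcases le_total t τ with h | h
    · exact (hC t ⟨ht, h⟩).trans (le_max_left _ _)
    · exact (hyR t h).trans (le_max_right _ _)

end DelayedFollower

theorem stmt_11_general (d : ℕ) (τ a : ℝ) (hτ : 0 < τ)
    (ψ : ℝ → ℝ) (hψ_cont : Continuous ψ) (hψ_pos : ∀ s ≥ (0:ℝ), 0 < ψ s)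
    (hψ_mono : AntitoneOn ψ (Set.Ici 0))
    (hdiv : Filter.Tendsto (fun R => ∫ s in a..R, ψ s) Filter.atTop Filter.atTop)
    (x₁ x₂ v₁ v₂ : ℝ → EuclideanSpace ℝ (Fin d))
    (hx₁ : ∀ t ≥ (0:ℝ), HasDerivAt x₁ (v₁ t) t)
    (hx₂ : ∀ t ≥ (0:ℝ), HasDerivAt x₂ (v₂ t) t)
    (hv₁ : ∀ t ≥ (0:ℝ), HasDerivAt v₁ 0 t)
    (hv₂ : ∀ t ≥ τ, HasDerivAt v₂
      (ψ (‖x₂ (t - τ) - x₁ (t - τ)‖) • (v₁ (t - τ) - v₂ t)) t) :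
    (∃ C > (0:ℝ), ∃ B > (0:ℝ), ∀ t ≥ 2 * τ, ‖v₂ t - v₁ t‖ ≤ C * Real.exp (-B * t)) ∧
    ∃ M : ℝ, ∀ t ≥ (0:ℝ), ‖x₂ t - x₁ t‖ ≤ M := by
  have hv₁_const : ∀ t ≥ 0, v₁ t = v₁ 0 := fun t ht => eq_of_hasDerivAt_zero_of_le hv₁ ht
  have hy : ∀ t ≥ 0, HasDerivAt (fun t => x₂ t - x₁ t) (v₂ t - v₁ 0) t := fun t ht =>
    hv₁_const t ht ▸ (hx₂ t ht).sub (hx₁ t ht)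
  have hw : ∀ t ≥ τ, HasDerivAt (fun t => v₂ t - v₁ 0)
      (-ψ ‖x₂ (t - τ) - x₁ (t - τ)‖ • (v₂ t - v₁ 0)) t := fun t ht => by
    refine ((hv₂ t ht).sub_const (v₁ 0)).congr_deriv ?_
    rw [hv₁_const (t - τ) (by linarith), neg_smul, ← smul_neg, neg_sub]
  obtain ⟨⟨C, hC, B, hB, hdecay⟩, hbounded⟩ :=
    flocking_of_delayed_follower hτ.le hψ_cont hψ_pos hψ_mono hdiv hy hw
  refine ⟨⟨C, hC, B, hB, fun t ht => ?_⟩, hbounded⟩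
  rw [hv₁_const t (by linarith)]
  exact hdecay t ht

theorem stmt_11 (d : ℕ) (τ a : ℝ) (hτ : 0 < τ) (ha : 0 < a)
    (ψ : ℝ → ℝ) (hψ_cont : Continuous ψ) (hψ_pos : ∀ s ≥ (0:ℝ), 0 < ψ s)
    (hψ_mono : AntitoneOn ψ (Set.Ici 0))
    (hdiv : Filter.Tendsto (fun R => ∫ s in a..R, ψ s) Filter.atTop Filter.atTop)
    (x₁ x₂ v₁ v₂ : ℝ → EuclideanSpace ℝ (Fin d))
    (hcont : ContinuousOn x₁ (Set.Icc (-τ) 0) ∧ ContinuousOn x₂ (Set.Icc (-τ) 0) ∧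
      ContinuousOn v₁ (Set.Icc (-τ) 0) ∧ ContinuousOn v₂ (Set.Icc (-τ) 0))
    (hx₁ : ∀ t ≥ (0:ℝ), HasDerivAt x₁ (v₁ t) t)
    (hx₂ : ∀ t ≥ (0:ℝ), HasDerivAt x₂ (v₂ t) t)
    (hv₁ : ∀ t ≥ (0:ℝ), HasDerivAt v₁ 0 t)
    (hv₂ : ∀ t ≥ τ, HasDerivAt v₂
      (ψ (‖x₂ (t - τ) - x₁ (t - τ)‖) • (v₁ (t - τ) - v₂ t)) t) :
    (∃ C > (0:ℝ), ∃ B > (0:ℝ), ∀ t ≥ 2 * τ, ‖v₂ t - v₁ t‖ ≤ C * Real.exp (-B * t)) ∧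
    ∃ M : ℝ, ∀ t ≥ (0:ℝ), ‖x₂ t - x₁ t‖ ≤ M :=
  stmt_11_general d τ a hτ ψ hψ_cont hψ_pos hψ_mono hdiv x₁ x₂ v₁ v₂ hx₁ hx₂ hv₁ hv₂
end
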